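/- arXiv:0810.2139 — 2 statements merged into one kernel-verified Lean document; each statement's English description precedes it below -/
import Mathlib

section
/- A holomorphic 1-form on a compact Riemann surface all of whose periods (integrals over closed loops) are real numbers is identically zero. -/
/-!
A period-invariant entire function is continuous and takes all its values on the compact
fundamental parallelogram, so it is bounded and hence constant by Liouville, say `f = c`.
The two periods are then `c * ω₁` and `c * ω₂`; if both are real and `c ≠ 0`, multiplication
by `c` would map the `ℝ`-basis `ω₁, ω₂` of `ℂ` into the line `ℝ`, which is impossible.
-/

open Function Set

theorem Function.Periodic.of_mem_span_int {M α : Type*} [AddCommGroup M] {f : M → α}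
    {s : Set M} (h : ∀ c ∈ s, Periodic f c) {v : M} (hv : v ∈ Submodule.span ℤ s) :
    Periodic f v := by
  induction hv using Submodule.span_induction with
  | mem c hc => exact h c hc
  | zero => exact periodic_with_period_zero f
  | add _ _ _ _ hx hy => exact hx.add_period hy
  | smul n _ _ hx => exact hx.zsmul n

theorem ZSpan.isBounded_range_of_periodic {E α ι : Type*} [NormedAddCommGroup E]
    [NormedSpace ℝ E] [PseudoMetricSpace α] [Fintype ι] (b : Module.Basis ι ℝ E) {f : E → α}
    (hf : Continuous f) (hper : ∀ i, Periodic f (b i)) : Bornology.IsBounded (range f) := by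
  have := Module.Finite.of_basis b
  have hfract : ∀ z, f (ZSpan.fract b z) = f z := fun z =>
    (Periodic.of_mem_span_int (by simpa using hper) (ZSpan.floor b z).2).sub_eq z
  refine ((isCompact_closedBall 0 (∑ i, ‖b i‖)).image hf).isBounded.subset ?_
  rintro _ ⟨z, rfl⟩
  exact ⟨ZSpan.fract b z, mem_closedBall_zero_iff.mpr (ZSpan.norm_fract_le b z), hfract z⟩

theorem Complex.eq_zero_of_im_mul_eq_zero_of_linearIndependent {c ω₁ ω₂ : ℂ}
    (hind : LinearIndependent ℝ ![ω₁, ω₂]) (h₁ : (c * ω₁).im = 0) (h₂ : (c * ω₂).im = 0) :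
    c = 0 := by
  by_contra hc
  have e₁ : c * ω₁ = (c * ω₁).re := Complex.ext rfl (by simp [h₁])
  have e₂ : c * ω₂ = (c * ω₂).re := Complex.ext rfl (by simp [h₂])
  have hrel : c * ((c * ω₂).re • ω₁ + (-(c * ω₁).re) • ω₂) = 0 := by
    calc _ = (c * ω₂).re * (c * ω₁) - (c * ω₁).re * (c * ω₂) := by
            simp only [Complex.real_smul]; push_cast; ring
      _ = 0 := by rw [e₁, e₂]; simp only [Complex.ofReal_re]; ring
  have hre₂ : (c * ω₂).re = 0 :=
    (LinearIndependent.pair_iff.mp hind _ _ ((mul_eq_zero.mp hrel).resolve_left hc)).1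
  have hω₂ : ω₂ = 0 := (mul_eq_zero.mp (Complex.ext hre₂ h₂)).resolve_left hc
  exact hind.ne_zero 1 (by simpa using hω₂)

/-- A holomorphic 1-form on a compact Riemann surface all of whose periods are real
is identically zero. Formalized for a genus-1 surface `ℂ/Λ`, `Λ = ℤω₁ + ℤω₂`:
a holomorphic 1-form is `f dz` with `f` entire and `Λ`-periodic; since `H₁` is
generated by the loops coming from `ω₁, ω₂`, all periods are real iff the integrals
of `f dz` along the segments from `0` to `ω₁` and to `ω₂` are real. -/
theorem holomorphic_form_real_periods_zero
    (ω₁ ω₂ : ℂ) (hind : LinearIndependent ℝ ![ω₁, ω₂])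
    (f : ℂ → ℂ) (hf : Differentiable ℂ f)
    (hper₁ : ∀ z, f (z + ω₁) = f z) (hper₂ : ∀ z, f (z + ω₂) = f z)
    (hreal₁ : (∫ t in (0:ℝ)..1, f (t • ω₁) * ω₁).im = 0)
    (hreal₂ : (∫ t in (0:ℝ)..1, f (t • ω₂) * ω₂).im = 0) :
    ∀ z, f z = 0 := by
  let b := basisOfLinearIndependentOfCardEqFinrank hind (by simp)
  have hb : ⇑b = ![ω₁, ω₂] := coe_basisOfLinearIndependentOfCardEqFinrank hind _
  have hbdd : Bornology.IsBounded (range f) :=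
    ZSpan.isBounded_range_of_periodic b hf.continuous <| by
      simp [hb, Fin.forall_fin_two, hper₁, hper₂]
  have hconst : ∀ z, f z = f 0 := fun z => hf.apply_eq_apply_of_bounded hbdd z 0
  have hintegral : ∀ ω : ℂ, ∫ t in (0:ℝ)..1, f (t • ω) * ω = f 0 * ω := by
    simp [hconst]
  have hzero : f 0 = 0 := Complex.eq_zero_of_im_mul_eq_zero_of_linearIndependent hind
    (hintegral ω₁ ▸ hreal₁) (hintegral ω₂ ▸ hreal₂)
  exact fun z => (hconst z).trans hzero
end

section
/- If Ω is a holomorphic 1-form on a compact Riemann surface such that Ω − conj(Ω) represents the zero class in first de Rham cohomology, then Ω = 0. -/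
/-!
A continuous function on `ℂ` with two `ℝ`-independent periods is bounded, since it takes all its
values on the compact closure of a fundamental parallelogram. By Liouville, `f` is then a
constant `c`, so `h - h 0` is the `ℝ`-linear map `v ↦ c v - c̄ v̄`. Being periodic, `h` is bounded
too, and a bounded linear map vanishes; evaluating at `1` and `I` gives `c = 0`.
-/

open Bornology Function Set

theorem Function.periodic_of_mem_span_int {E ι X : Type*} [AddCommGroup E] {v : ι → E}
    {f : E → X} (hper : ∀ i, Periodic f (v i)) {p : E} (hp : p ∈ Submodule.span ℤ (range v)) :
    Periodic f p := by
  induction hp using Submodule.span_induction with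
  | mem _ hx => obtain ⟨i, rfl⟩ := hx; exact hper i
  | zero => exact fun _ => by rw [add_zero]
  | add _ _ _ _ h₁ h₂ => exact h₁.add_period h₂
  | smul n _ _ h => exact h.zsmul n

theorem isBounded_range_of_periodic_basis {E ι X : Type*} [NormedAddCommGroup E]
    [NormedSpace ℝ E] [FiniteDimensional ℝ E] [Fintype ι] [PseudoMetricSpace X]
    (b : Module.Basis ι ℝ E) {f : E → X} (hf : Continuous f) (hper : ∀ i, Periodic f (b i)) :
    IsBounded (range f) := by
  have hK : IsCompact (closure (ZSpan.fundamentalDomain b)) :=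
    (ZSpan.fundamentalDomain_isBounded b).isCompact_closure
  refine (hK.image hf).isBounded.subset ?_
  rintro _ ⟨z, rfl⟩
  refine ⟨ZSpan.fract b z, subset_closure (ZSpan.fract_mem_fundamentalDomain b z), ?_⟩
  rw [ZSpan.fract_apply]
  exact (periodic_of_mem_span_int hper (ZSpan.floor b z).2).sub_eq z

theorem isBounded_range_of_periodic₂ {X : Type*} [PseudoMetricSpace X] {ω₁ ω₂ : ℂ}
    (hind : LinearIndependent ℝ ![ω₁, ω₂]) {f : ℂ → X} (hf : Continuous f)
    (hper₁ : Periodic f ω₁) (hper₂ : Periodic f ω₂) : IsBounded (range f) := by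
  have hcard : Fintype.card (Fin 2) = Module.finrank ℝ ℂ := by simp
  refine isBounded_range_of_periodic_basis (basisOfLinearIndependentOfCardEqFinrank hind hcard) hf ?_
  simpa [Fin.forall_fin_two] using ⟨hper₁, hper₂⟩

theorem LinearMap.eq_zero_of_isBounded_range {𝕜 E F : Type*} [NontriviallyNormedField 𝕜]
    [AddCommGroup E] [Module 𝕜 E] [NormedAddCommGroup F] [NormedSpace 𝕜 F] (L : E →ₗ[𝕜] F)
    (hL : IsBounded (Set.range L)) : L = 0 := by
  obtain ⟨C, hC⟩ := isBounded_iff_forall_norm_le.mp hL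
  ext v
  by_contra hv
  have hpos : 0 < ‖L v‖ := norm_pos_iff.mpr hv
  obtain ⟨t, ht⟩ := NormedField.exists_lt_norm 𝕜 (C / ‖L v‖)
  have := hC _ ⟨t • v, rfl⟩
  rw [map_smul, norm_smul] at this
  rw [div_lt_iff₀ hpos] at ht
  linarith

theorem Complex.eq_zero_of_forall_mul_sub_conj_mul_eq_zero {c : ℂ}
    (h : ∀ v, c * v - (starRingEnd ℂ) c * (starRingEnd ℂ) v = 0) : c = 0 := by
  have h₁ := h 1
  have h₂ := h I
  apply Complex.ext <;> simp_all [Complex.ext_iff]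

/-- The genus-one case `X = ℂ/Λ`, `Λ = ℤω₁ + ℤω₂`: `Ω = f dz` with `f` entire and `Λ`-periodic,
and `Ω - conj Ω = dh` for a `Λ`-periodic, real-differentiable `h`. -/
theorem holomorphic_form_exact_difference_zero
    (ω₁ ω₂ : ℂ) (hind : LinearIndependent ℝ ![ω₁, ω₂])
    (f : ℂ → ℂ) (hf : Differentiable ℂ f)
    (hper₁ : ∀ z, f (z + ω₁) = f z) (hper₂ : ∀ z, f (z + ω₂) = f z)
    (h : ℂ → ℂ) (hh : Differentiable ℝ h)
    (hhper₁ : ∀ z, h (z + ω₁) = h z) (hhper₂ : ∀ z, h (z + ω₂) = h z)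
    (hexact : ∀ z v, fderiv ℝ h z v
      = f z * v - (starRingEnd ℂ) (f z) * (starRingEnd ℂ) v) :
    ∀ z, f z = 0 := by
  obtain ⟨c, hc⟩ := hf.exists_const_forall_eq_of_bounded
    (isBounded_range_of_periodic₂ hind hf.continuous hper₁ hper₂)
  let L : ℂ →L[ℝ] ℂ := c • (ContinuousLinearMap.id ℂ ℂ).restrictScalars ℝ
    - (starRingEnd ℂ) c • Complex.conjCLE.toContinuousLinearMap
  have hL : ∀ v, L v = c * v - (starRingEnd ℂ) c * (starRingEnd ℂ) v := fun v => rfl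
  have hhL : h = fun z => h 0 + L z :=
    eq_of_fderiv_eq hh (by fun_prop) (fun z => by
      rw [fderiv_const_add, L.fderiv]; ext1 v; rw [hexact, hc, hL]) 0 (by simp)
  have hL0 : (L : ℂ →ₗ[ℝ] ℂ) = 0 := by
    refine LinearMap.eq_zero_of_isBounded_range _ ?_
    have hbdd := isBounded_range_of_periodic₂ hind hh.continuous hhper₁ hhper₂
    refine (hbdd.vadd (-h 0)).subset ?_
    rintro _ ⟨v, rfl⟩
    exact ⟨h v, ⟨v, rfl⟩, by rw [hhL]; simp⟩
  have hc0 : c = 0 := Complex.eq_zero_of_forall_mul_sub_conj_mul_eq_zero fun v => by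
    rw [← hL]; exact LinearMap.congr_fun hL0 v
  simpa [hc0] using hc
end
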